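/- arXiv:2407.01387 — 2 statements merged into one kernel-verified Lean document; each statement's English description precedes it below -/
import Mathlib

section
/- Fix r ≥ 1 and let a = σ₁^{γ₁}⋯σ_n^{γ_n} be an r-coloured permutation of length n. For m ≥ 1, define the polynomial ψ_m(a) ∈ ℚ[p₀,…,p_{r−1},x] as the sum of p^{col(a)} x^{i₁+i₂+⋯+i_n−n} over all sequences 1 ≤ i₁ ≤ i₂ ≤ ⋯ ≤ i_n ≤ m such that i_j < i_{j+1} whenever j ∈ Des(a) ∩ [n−1], and i₁ ≥ 2 whenever 0 ∈ Des(a). Then in ℚ[p₀,…,p_{r−1},x]⟦t⟧ one has Σ_{m=1}^∞ ψ_m(a) t^{m−1} = p^{col(a)} x^{comaj(a)} t^{des(a)} / ((1−t)(1−xt)⋯(1−xⁿt)). -/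
open scoped Classical

noncomputable section

/-- A coloured permutation: a list of (symbol, colour) pairs. -/
abbrev CPerm : Type := List (ℕ × ℕ)

/-- `a` is a genuine coloured permutation: distinct, positive symbols. -/
def IsCPerm (a : CPerm) : Prop :=
  (a.map Prod.fst).Nodup ∧ ∀ p ∈ a, 0 < p.1

/-- The colour order on coloured integers: `p < q` iff the colour of `p` is bigger
(as an integer), or the colours agree and the symbol of `p` is smaller. -/
def cLt (p q : ℕ × ℕ) : Prop :=
  q.2 < p.2 ∨ (p.2 = q.2 ∧ p.1 < q.1)

instance : DecidableRel cLt := fun p q => by unfold cLt; infer_instance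

/-- The descent set of a coloured permutation (positions `0,…,n−1`; position `i ≥ 1`
is a descent iff the `(i+1)`-st entry is smaller than the `i`-th entry (1-indexed)
in the colour order; `0` is a descent iff the first colour is nonzero). -/
def DesSet (a : CPerm) : Finset ℕ :=
  (Finset.range a.length).filter fun i =>
    if i = 0 then (a.getD 0 (0, 0)).2 ≠ 0
    else cLt (a.getD i (0, 0)) (a.getD (i - 1) (0, 0))

/-- Descent number. -/
def des (a : CPerm) : ℕ := (DesSet a).card

/-- Comajor index. -/
def comaj (a : CPerm) : ℕ := ∑ i ∈ DesSet a, (a.length - i)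

/-- `colVec a j` is the number of entries of `a` of colour `j`. -/
def colVec (a : CPerm) (j : ℕ) : ℕ := (a.map Prod.snd).count j

/-- The multiset of shuffles of two lists. -/
def shuffles {α : Type*} : List α → List α → Multiset (List α)
  | [], bs => {bs}
  | a :: as, [] => {a :: as}
  | a :: as, b :: bs =>
      ((shuffles as (b :: bs)).map (a :: ·)) + ((shuffles (a :: as) bs).map (b :: ·))
  termination_by as bs => as.length + bs.length

/-- The set of symbols of a coloured permutation. -/
def symbols (a : CPerm) : Finset ℕ := (a.map Prod.fst).toFinset

/-- The set of nonzero colours of a coloured permutation. -/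
def paletteStar (a : CPerm) : Finset ℕ := ((a.map Prod.snd).toFinset).erase 0

/-- Two coloured permutations are symbol-disjoint if they share no symbols. -/
def SymbolDisjoint (a b : CPerm) : Prop := Disjoint (symbols a) (symbols b)

/-- `a` is `r`-coloured: all colours lie in `{0,…,r−1}`. -/
def RColoured (r : ℕ) (a : CPerm) : Prop := ∀ p ∈ a, p.2 < r

/-- Symbols of a coloured configuration (= multiset of coloured permutations). -/
def msymbols (f : Multiset CPerm) : Finset ℕ := (f.map symbols).sup

/-- `palette*` of a coloured configuration. -/
def mpalette (f : Multiset CPerm) : Finset ℕ := (f.map paletteStar).sup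

/-- The shuffle of two coloured configurations (bi-additive extension). -/
def mshuffle (f g : Multiset CPerm) : Multiset CPerm :=
  f.bind fun a => g.bind fun b => shuffles a b

/-- Hadamard product of formal power series. -/
def hadamard {R : Type*} [Semiring R] (A B : PowerSeries R) : PowerSeries R :=
  PowerSeries.mk fun k => (PowerSeries.coeff (R := R) k) A * (PowerSeries.coeff (R := R) k) B

/-- The geometric series `1/(1 − c·Y) = Σ_k c^k Y^k`. -/
def geom {R : Type*} [Semiring R] (c : R) : PowerSeries R :=
  PowerSeries.mk fun k => c ^ k

/-- The field ℚ(X) of rational functions. -/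
abbrev K : Type := RatFunc ℚ

/-- The variable X of ℚ(X). -/
def XX : K := RatFunc.X

/-- Membership in `U = {±X^k : k ∈ ℤ}`. -/
def InU (u : K) : Prop := ∃ k : ℤ, u = XX ^ k ∨ u = -XX ^ k

/-- `α(a) = Π_i α(γ_i)`. -/
def alphaProd (α : ℕ → K) (a : CPerm) : K := (a.map fun p => α p.2).prod

/-- The summand of `W^ε_{f,α}` corresponding to a single coloured permutation. -/
def Wterm (ε : ℤ) (α : ℕ → K) (a : CPerm) : PowerSeries K :=
  PowerSeries.C (R := K) (alphaProd α a * XX ^ (ε * (comaj a : ℤ))) * PowerSeries.X ^ des a *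
    ∏ i ∈ Finset.range (a.length + 1), geom (XX ^ (ε * (i : ℤ)))

/-- `W^ε_{f,α} = Σ_a f_a α(a) X^{ε·comaj(a)} Y^{des(a)} / ((1−Y)⋯(1−X^{ε|a|}Y))`. -/
def W (ε : ℤ) (α : ℕ → K) (f : Multiset CPerm) : PowerSeries K :=
  (f.map (Wterm ε α)).sum

/-- `(f,α)` is a labelled coloured configuration. -/
def IsLCC (f : Multiset CPerm) (α : ℕ → K) : Prop :=
  (∀ a ∈ f, IsCPerm a) ∧ (∀ c, InU (α c)) ∧ (∀ c ∉ mpalette f, α c = 1)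


/-- The polynomial ring `ℚ[p₀,p₁,…][x]`; `x` is `Polynomial.X` and `p_j` is
`MvPolynomial.X j`. -/
abbrev PXRing : Type := Polynomial (MvPolynomial ℕ ℚ)

/-- The monomial `p^{col(a)} = p₀^{col₀(a)} ⋯`. -/
def pMon (a : CPerm) : MvPolynomial ℕ ℚ := (a.map fun p => MvPolynomial.X p.2).prod

/-- `Φ(a) = p^{col(a)} x^{comaj(a)} t^{des(a)} / ((1−t)(1−xt)⋯(1−xⁿt))`. -/
def Phi (a : CPerm) : PowerSeries PXRing :=
  PowerSeries.C (R := PXRing) (Polynomial.C (pMon a) * Polynomial.X ^ comaj a) *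
    PowerSeries.X ^ des a *
    ∏ i ∈ Finset.range (a.length + 1), geom ((Polynomial.X : PXRing) ^ i)

/-- `ψ_m(a)`: the sum of `p^{col(a)} x^{i₁+⋯+i_n−n}` over all weakly increasing
sequences `1 ≤ i₁ ≤ ⋯ ≤ i_n ≤ m` (encoded as `v : Fin n → Fin (m+1)`,
`i_{j+1} = v j`) which increase strictly at descents in `Des(a) ∩ [n−1]` and
start at `i₁ ≥ 2` whenever `0 ∈ Des(a)`. -/
def psi (a : CPerm) (m : ℕ) : PXRing :=
  ∑ v ∈ Finset.univ.filter (fun v : Fin a.length → Fin (m + 1) =>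
      (∀ j, 1 ≤ (v j : ℕ)) ∧
      (∀ j k, j ≤ k → (v j : ℕ) ≤ (v k : ℕ)) ∧
      (∀ j k : Fin a.length, (k : ℕ) = (j : ℕ) + 1 → (j : ℕ) + 1 ∈ DesSet a →
        (v j : ℕ) < (v k : ℕ)) ∧
      (0 ∈ DesSet a → ∀ j : Fin a.length, (j : ℕ) = 0 → 2 ≤ (v j : ℕ))),
    Polynomial.C (pMon a) * Polynomial.X ^ ((∑ j, (v j : ℕ)) - a.length)

/-!
Writing `i_j = c_j + 1 + d_j`, where `d_j` is the number of descents of `a` among the positions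
`0, …, j - 1`, turns the sequences summed in `ψ_m(a)` into the weakly increasing sequences
`0 ≤ c_1 ≤ ⋯ ≤ c_n ≤ m - 1 - des(a)`, and shifts the exponent of `x` by `Σ_j d_j = comaj(a)`.
The generating function `F_n` of such sequences, weighted by `x^{Σ c_j}`, is
`∏_{i=0}^{n} 1/(1 - x^i t)`: separating the sequences with `c_1 = 0` from the others gives
`F_n = F_{n-1} + x^n t F_n`.
-/

open Finset

lemma one_sub_C_mul_X_mul_geom {R : Type*} [CommRing R] (c : R) :
    (1 - PowerSeries.C c * PowerSeries.X) * geom c = 1 := by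
  have h : geom c = PowerSeries.rescale c (PowerSeries.mk 1) := by
    simp [geom, PowerSeries.rescale_mk]
  rw [h, ← PowerSeries.rescale_X, ← map_one (PowerSeries.rescale c), ← map_sub, ← map_mul,
    mul_comm, PowerSeries.mk_one_mul_one_sub_eq_one, map_one]

section MonotoneSeqs

def monotoneSeqs (n k : ℕ) : Finset (Fin n → ℕ) :=
  {c ∈ Fintype.piFinset fun _ => range (k + 1) | Monotone c}

lemma mem_monotoneSeqs {n k : ℕ} {c : Fin n → ℕ} :
    c ∈ monotoneSeqs n k ↔ (∀ j, c j ≤ k) ∧ Monotone c := by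
  simp [monotoneSeqs]

lemma monotoneSeqs_zero_right (n : ℕ) : monotoneSeqs n 0 = {0} := by
  ext c
  simp only [mem_monotoneSeqs, nonpos_iff_eq_zero, mem_singleton, funext_iff, Pi.zero_apply]
  exact ⟨And.left, fun h => ⟨h, fun i j _ => by simp [h]⟩⟩

lemma monotoneSeqs_zero_left (k : ℕ) : monotoneSeqs 0 k = {0} := by
  ext c
  simp [mem_monotoneSeqs, Subsingleton.elim c 0, Subsingleton.monotone]

variable {R : Type*} [CommSemiring R] (x : R)

/-- The Gaussian binomial coefficient `[n + k choose n]_x`. -/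
def monotoneSeqsPoly (n k : ℕ) : R := ∑ c ∈ monotoneSeqs n k, x ^ ∑ j, c j

lemma monotoneSeqsPoly_zero_right (n : ℕ) : monotoneSeqsPoly x n 0 = 1 := by
  simp [monotoneSeqsPoly, monotoneSeqs_zero_right]

lemma monotoneSeqsPoly_zero_left (k : ℕ) : monotoneSeqsPoly x 0 k = 1 := by
  simp [monotoneSeqsPoly, monotoneSeqs_zero_left]

lemma sum_monotoneSeqs_head_eq_zero (n k : ℕ) :
    ∑ c ∈ monotoneSeqs (n + 1) k with c 0 = 0, x ^ ∑ j, c j = monotoneSeqsPoly x n k := by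
  refine sum_nbij' Fin.tail (fun c => (Fin.cons 0 c : Fin (n + 1) → ℕ)) (fun c hc => ?_)
    (fun c hc => ?_) (fun c hc => ?_) (fun c _ => Fin.tail_cons _ _) (fun c hc => ?_)
  · rw [mem_filter, mem_monotoneSeqs] at hc
    exact mem_monotoneSeqs.2 ⟨fun j => hc.1.1 _, hc.1.2.comp Fin.strictMono_succ.monotone⟩
  · rw [mem_monotoneSeqs] at hc
    simp only [mem_filter, mem_monotoneSeqs, Fin.cons_zero, and_true]
    refine ⟨Fin.cases (by simp) (by simpa using hc.1), Fin.monotone_iff_le_succ.2 fun i => ?_⟩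
    cases n with
    | zero => exact i.elim0
    | succ n =>
      cases i using Fin.cases with
      | zero => simp
      | succ i => simpa [← Fin.succ_castSucc] using hc.2 (Fin.castSucc_le_succ i)
  · rw [mem_filter] at hc
    rw [← hc.2, Fin.cons_self_tail]
  · rw [mem_filter] at hc
    simp [Fin.sum_univ_succ, hc.2, Fin.tail]

lemma sum_monotoneSeqs_head_ne_zero (n k : ℕ) :
    ∑ c ∈ monotoneSeqs (n + 1) (k + 1) with c 0 ≠ 0, x ^ ∑ j, c j =
      x ^ (n + 1) * monotoneSeqsPoly x (n + 1) k := by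
  have hpos : ∀ c ∈ {c ∈ monotoneSeqs (n + 1) (k + 1) | c 0 ≠ 0}, ∀ j, 1 ≤ c j := by
    intro c hc j
    simp only [mem_filter, mem_monotoneSeqs] at hc
    exact (Nat.one_le_iff_ne_zero.2 hc.2).trans (hc.1.2 (Fin.zero_le j))
  rw [monotoneSeqsPoly, mul_sum]
  refine sum_nbij' (· - 1) (· + 1) (fun c hc => ?_) (fun c hc => ?_)
    (fun c hc => ?_) (fun c _ => ?_) (fun c hc => ?_)
  · simp only [mem_filter, mem_monotoneSeqs] at hc ⊢
    exact ⟨fun j => Nat.sub_le_of_le_add (hc.1.1 j),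
      fun i j hij => Nat.sub_le_sub_right (hc.1.2 hij) 1⟩
  · simp only [mem_filter, mem_monotoneSeqs] at hc ⊢
    exact ⟨⟨fun j => Nat.add_le_add_right (hc.1 j) 1, hc.2.add_const 1⟩, by simp⟩
  · ext j
    simpa using Nat.sub_add_cancel (hpos c hc j)
  · ext j
    simp
  · rw [← pow_add]
    congr 1
    simp only [Pi.sub_apply, Pi.one_apply]
    rw [← sum_congr rfl fun j _ => Nat.sub_add_cancel (hpos c hc j), sum_add_distrib]
    simp [add_comm]

lemma monotoneSeqsPoly_succ_succ (n k : ℕ) :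
    monotoneSeqsPoly x (n + 1) (k + 1) =
      monotoneSeqsPoly x n (k + 1) + x ^ (n + 1) * monotoneSeqsPoly x (n + 1) k := by
  rw [monotoneSeqsPoly, ← sum_filter_add_sum_filter_not _ (fun c => c 0 = 0),
    sum_monotoneSeqs_head_eq_zero, sum_monotoneSeqs_head_ne_zero]

theorem mk_monotoneSeqsPoly {R : Type*} [CommRing R] (x : R) (n : ℕ) :
    PowerSeries.mk (monotoneSeqsPoly x n) = ∏ i ∈ range (n + 1), geom (x ^ i) := by
  induction n with
  | zero => ext k; simp [geom, monotoneSeqsPoly_zero_left]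
  | succ n ih =>
    have hrec : PowerSeries.mk (monotoneSeqsPoly x (n + 1)) *
        (1 - PowerSeries.C (x ^ (n + 1)) * PowerSeries.X) =
          PowerSeries.mk (monotoneSeqsPoly x n) := by
      rw [mul_sub, mul_one, mul_left_comm]
      ext (_ | k)
      · simp [monotoneSeqsPoly_zero_right]
      · simp only [map_sub, PowerSeries.coeff_succ_mul_X, PowerSeries.coeff_C_mul,
          PowerSeries.coeff_mk, monotoneSeqsPoly_succ_succ, add_sub_cancel_right]
    rw [prod_range_succ, ← ih, ← hrec, mul_assoc, one_sub_C_mul_X_mul_geom, mul_one]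

end MonotoneSeqs

section CountLE

variable (S : Finset ℕ)

def countLE (j : ℕ) : ℕ := #{i ∈ S | i ≤ j}

lemma countLE_zero : countLE S 0 = if 0 ∈ S then 1 else 0 := by
  simp only [countLE, nonpos_iff_eq_zero, filter_eq']
  split_ifs <;> rfl

lemma countLE_succ (j : ℕ) :
    countLE S (j + 1) = countLE S j + if j + 1 ∈ S then 1 else 0 := by
  simp only [countLE, Nat.le_succ_iff, filter_or, filter_eq']
  split_ifs
  · rw [union_singleton, card_insert_of_notMem (by simp)]
  · simp

lemma countLE_of_val_eq_succ {n : ℕ} {j k : Fin n} (hk : (k : ℕ) = j + 1) :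
    countLE S k = countLE S j + if (j : ℕ) + 1 ∈ S then 1 else 0 :=
  hk ▸ countLE_succ S j

lemma countLE_mono : Monotone (countLE S) := fun _ _ hij =>
  card_le_card (monotone_filter_right _ fun _ _ hi => hi.trans hij)

lemma countLE_le_card (j : ℕ) : countLE S j ≤ #S :=
  card_le_card (filter_subset _ _)

variable {S} {n : ℕ}

lemma countLE_eq_card (hS : S ⊆ range n) {j : ℕ} (hj : n ≤ j + 1) : countLE S j = #S := by
  rw [countLE, filter_true_of_mem]
  intro i hi
  have := mem_range.1 (hS hi)
  omega

lemma sum_range_countLE (hS : S ⊆ range n) :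
    ∑ j ∈ range n, countLE S j = ∑ i ∈ S, (n - i) := by
  simp only [countLE, card_filter]
  rw [sum_comm]
  refine sum_congr rfl fun i hi => ?_
  have hin := mem_range.1 (hS hi)
  rw [← card_filter, ← Nat.card_Ico i n]
  congr 1
  ext j
  simp only [mem_filter, mem_range, mem_Ico]
  omega

end CountLE

lemma Fin.monotone_of_le_of_val_eq_succ {α : Type*} [Preorder α] {n : ℕ} {f : Fin n → α}
    (h : ∀ j k : Fin n, (k : ℕ) = j + 1 → f j ≤ f k) : Monotone f := by
  cases n with
  | zero => exact fun i => i.elim0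
  | succ n => exact Fin.monotone_iff_le_succ.2 fun i => h _ _ (by simp)

section DescentCompatible

/-- With `S = DesSet a`, this is the condition on the summation indices of `psi a m`. -/
def IsDescentCompatible (S : Finset ℕ) {n : ℕ} (v : Fin n → ℕ) : Prop :=
  (∀ j, 1 ≤ v j) ∧ (∀ j k, j ≤ k → v j ≤ v k) ∧
    (∀ j k : Fin n, (k : ℕ) = j + 1 → (j : ℕ) + 1 ∈ S → v j < v k) ∧
    (0 ∈ S → ∀ j : Fin n, (j : ℕ) = 0 → 2 ≤ v j)

variable {S : Finset ℕ} {n : ℕ} {v : Fin n → ℕ}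

lemma isDescentCompatible_iff :
    IsDescentCompatible S v ↔
      (∀ j : Fin n, countLE S j < v j) ∧ Monotone fun j => v j - countLE S j := by
  constructor
  · rintro ⟨hpos, hmono, hstrict, hzero⟩
    have hshift : Monotone fun j => v j - countLE S j := by
      refine Fin.monotone_of_le_of_val_eq_succ fun j k hk => ?_
      have hjk := hmono j k (Fin.le_def.2 (by omega))
      have hcount := countLE_of_val_eq_succ S hk
      by_cases hj : (j : ℕ) + 1 ∈ S
      · have := hstrict j k hk hj
        rw [if_pos hj] at hcount
        omega
      · rw [if_neg hj] at hcount
        omega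
    refine ⟨fun j => ?_, hshift⟩
    have hj := hshift (show (⟨0, j.pos⟩ : Fin n) ≤ j from Fin.le_def.2 (Nat.zero_le _))
    have h0 := hpos ⟨0, j.pos⟩
    dsimp only at hj
    by_cases hS : 0 ∈ S
    · have := hzero hS ⟨0, j.pos⟩ rfl
      rw [countLE_zero, if_pos hS] at hj
      omega
    · rw [countLE_zero, if_neg hS] at hj
      omega
  · rintro ⟨hlt, hshift⟩
    refine ⟨fun j => (hlt j).trans_le' (Nat.zero_le _), fun j k hjk => ?_, fun j k hk hj => ?_,
      fun h0 j hj => ?_⟩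
    · have := hshift hjk
      have := countLE_mono S (Fin.le_def.1 hjk)
      have := hlt j
      dsimp only at *
      omega
    · have := hshift (Fin.le_def.2 (show (j : ℕ) ≤ k by omega))
      have hcount := countLE_of_val_eq_succ S hk
      rw [if_pos hj] at hcount
      have := hlt j
      dsimp only at *
      omega
    · have hcount := countLE_zero S
      rw [if_pos h0, ← hj] at hcount
      have := hlt j
      omega

lemma card_le_of_isDescentCompatible (hS : S ⊆ range n) (hv : IsDescentCompatible S v) {k : ℕ}
    (hvk : ∀ j, v j ≤ k + 1) : #S ≤ k := by
  cases n with
  | zero => simp [subset_empty.1 (range_zero ▸ hS)]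
  | succ m =>
    have hlast := (isDescentCompatible_iff.1 hv).1 (Fin.last m)
    rw [Fin.val_last, countLE_eq_card hS le_rfl] at hlast
    have := hvk (Fin.last m)
    omega

lemma sub_countLE_mem_monotoneSeqs (hS : S ⊆ range n) (hv : IsDescentCompatible S v) {k : ℕ}
    (hvk : ∀ j, v j ≤ k + 1) : (fun j => v j - countLE S j - 1) ∈ monotoneSeqs n (k - #S) := by
  obtain ⟨-, hshift⟩ := isDescentCompatible_iff.1 hv
  refine mem_monotoneSeqs.2 ⟨fun j => ?_, fun i j hij => Nat.sub_le_sub_right (hshift hij) 1⟩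
  cases n with
  | zero => exact j.elim0
  | succ m =>
    have hj := hshift (Fin.le_last j)
    have hlast := hvk (Fin.last m)
    dsimp only at hj
    rw [Fin.val_last, countLE_eq_card hS le_rfl] at hj
    omega

lemma isDescentCompatible_add_countLE {c : Fin n → ℕ} (hc : Monotone c) :
    IsDescentCompatible S fun j => c j + countLE S j + 1 :=
  isDescentCompatible_iff.2 ⟨fun j => by omega, by convert hc.add_const 1 using 2; omega⟩

lemma add_countLE_lt {k : ℕ} (hk : #S ≤ k) {c : Fin n → ℕ} (hc : c ∈ monotoneSeqs n (k - #S))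
    (j : Fin n) : c j + countLE S j + 1 < k + 2 := by
  have := (mem_monotoneSeqs.1 hc).1 j
  have := countLE_le_card S j
  omega

theorem sum_isDescentCompatible {R : Type*} [CommSemiring R] (x : R) (hS : S ⊆ range n) (k : ℕ) :
    ∑ v ∈ univ.filter (fun v : Fin n → Fin (k + 2) => IsDescentCompatible S fun j => (v j : ℕ)),
        x ^ (∑ j, (v j : ℕ) - n) =
      x ^ (∑ i ∈ S, (n - i)) * if #S ≤ k then monotoneSeqsPoly x n (k - #S) else 0 := by
  have hvk (v : Fin n → Fin (k + 2)) (j : Fin n) : (v j : ℕ) ≤ k + 1 := Nat.lt_succ_iff.1 (v j).2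
  split_ifs with hk
  · rw [monotoneSeqsPoly, mul_sum]
    refine sum_bij' (fun v _ j => v j - countLE S j - 1)
      (fun c hc j => ⟨c j + countLE S j + 1, add_countLE_lt hk hc j⟩)
      (fun v hv => sub_countLE_mem_monotoneSeqs hS (mem_filter.1 hv).2 (hvk v))
      (fun c hc => mem_filter.2 ⟨mem_univ _,
        isDescentCompatible_add_countLE (mem_monotoneSeqs.1 hc).2⟩)
      (fun v hv => ?_) (fun c hc => ?_) (fun v hv => ?_)
    · have hlt := (isDescentCompatible_iff.1 (mem_filter.1 hv).2).1
      ext j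
      simp only
      have := hlt j
      omega
    · ext j
      simp only
      omega
    · have hlt := (isDescentCompatible_iff.1 (mem_filter.1 hv).2).1
      have hsum : ∑ j, (v j : ℕ) =
          ∑ j, ((v j : ℕ) - countLE S j - 1) + ∑ j : Fin n, countLE S j + n := by
        have hv (j : Fin n) : (v j : ℕ) = ((v j : ℕ) - countLE S j - 1) + countLE S j + 1 := by
          have := hlt j
          omega
        conv_lhs => rw [sum_congr rfl fun j _ => hv j]
        simp [sum_add_distrib]
      simp only
      rw [hsum, Fin.sum_univ_eq_sum_range (countLE S), sum_range_countLE hS, ← pow_add]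
      congr 1
      omega
  · rw [mul_zero]
    refine sum_eq_zero fun v hv => absurd ?_ hk
    exact card_le_of_isDescentCompatible hS (mem_filter.1 hv).2 (hvk v)

end DescentCompatible

lemma DesSet_subset_range (a : CPerm) : DesSet a ⊆ range a.length :=
  filter_subset _ _

lemma psi_succ (a : CPerm) (k : ℕ) :
    psi a (k + 1) = Polynomial.C (pMon a) * Polynomial.X ^ comaj a *
      if des a ≤ k then monotoneSeqsPoly Polynomial.X a.length (k - des a) else 0 := by
  rw [psi, ← mul_sum, mul_assoc]
  congr 1
  convert sum_isDescentCompatible (Polynomial.X : PXRing) (DesSet_subset_range a) k <;> rfl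

theorem sum_psi_eq_Phi_general (a : CPerm) :
    PowerSeries.mk (fun k => psi a (k + 1)) = Phi a := by
  ext k : 1
  rw [PowerSeries.coeff_mk, psi_succ, Phi, ← mk_monotoneSeqsPoly, mul_assoc (PowerSeries.C _),
    PowerSeries.coeff_C_mul, PowerSeries.coeff_X_pow_mul', PowerSeries.coeff_mk]

/-- **Proposition.** `Σ_{m≥1} ψ_m(a) t^{m−1} = p^{col(a)} x^{comaj(a)} t^{des(a)}
/ ((1−t)(1−xt)⋯(1−xⁿt))`. -/
theorem sum_psi_eq_Phi (r : ℕ) (hr : 1 ≤ r) (a : CPerm)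
    (ha : IsCPerm a) (hra : RColoured r a) :
    PowerSeries.mk (fun k => psi a (k + 1)) = Phi a :=
  sum_psi_eq_Phi_general a
end
end

section
/- Fix r ≥ 1 and work in the ring of formal power series in t over ℚ[p₀,…,p_{r−1},x,z]. For an r-coloured permutation a of length n ≥ 1, let Φ̃(a) = p^{col(a)} x^{comaj(a)} t^{des(a)+1} z^n / ((1−t)(1−xt)⋯(1−xⁿt)). Then for all symbol-disjoint r-coloured permutations a and b of positive length, Φ̃(a) *_t Φ̃(b) = Σ_{c ∈ a⧢b} Φ̃(c), where *_t is the Hadamard product in t and the sum runs over the multiset of shuffles of a and b. -/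
open scoped Classical

noncomputable section

/-- The polynomial ring `ℚ[p₀,p₁,…][x][z]`; `z` is the outer `Polynomial.X`,
`x` the inner `Polynomial.X`, and `p_j` is `MvPolynomial.X j`. -/
abbrev PXZRing : Type := Polynomial (Polynomial (MvPolynomial ℕ ℚ))

/-- The variable `x` inside `ℚ[p][x][z]`. -/
def xVar : PXZRing := Polynomial.C Polynomial.X

/-- `Φ̃(a) = p^{col(a)} x^{comaj(a)} z^{|a|} t^{des(a)+1} / ((1−t)(1−xt)⋯(1−xⁿt))`. -/
def PhiT (a : CPerm) : PowerSeries PXZRing :=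
  PowerSeries.C (R := PXZRing)
      (Polynomial.C (Polynomial.C (pMon a)) * xVar ^ comaj a * Polynomial.X ^ a.length) *
    PowerSeries.X ^ (des a + 1) *
    ∏ i ∈ Finset.range (a.length + 1), geom (xVar ^ i)

/-!
Expanding `1/((1-t)(1-xt)⋯(1-xⁿt))` shows that the coefficient of `t^(k+1)` in `Φ̃(a)` is
`p^col(a) zⁿ` times the sum of `x^(f₁+⋯+fₙ)` over the sequences `0 ≤ f₁ ≤ ⋯ ≤ fₙ ≤ k` that
increase strictly at the descents of `a` (with `f₁ > 0` if `0` is a descent): lowering each `fᵢ`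
by the number of descents up to position `i` turns them into all weakly increasing sequences
bounded by `k - des(a)`, at the cost of the factor `x^comaj(a)`. A Hadamard product thus
multiplies two such sums, and, as in Stanley's theory of `P`-partitions, a pair of compatible
sequences for `a` and `b` merges into a compatible sequence for exactly one shuffle of `a` and
`b`: ties between an entry of `a` and one of `b` are broken by the colour order, which is total
since `a` and `b` have no entry in common.
-/

open Finset

lemma perm_append_of_mem_shuffles {α : Type*} :
    ∀ {a b c : List α}, c ∈ shuffles a b → c.Perm (a ++ b) := by
  intro a b
  induction a, b using shuffles.induct with
  | case1 b => simp [shuffles]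
  | case2 a as => simp [shuffles]
  | case3 a as b bs ih₁ ih₂ =>
    intro c hc
    simp only [shuffles, Multiset.mem_add, Multiset.mem_map] at hc
    rcases hc with ⟨c, hc, rfl⟩ | ⟨c, hc, rfl⟩
    · exact (ih₁ hc).cons a
    · exact ((ih₂ hc).cons b).trans List.perm_middle.symm

def descInd (p q : ℕ × ℕ) : ℕ := if cLt q p then 1 else 0

lemma descInd_add_descInd {p q : ℕ × ℕ} (h : p ≠ q) : descInd p q + descInd q p = 1 := by
  rw [Ne, Prod.ext_iff] at h
  simp only [descInd]
  split_ifs <;> simp only [cLt] at * <;> omega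

lemma descInd_le_add (p q r : ℕ × ℕ) : descInd p r ≤ descInd p q + descInd q r := by
  simp only [descInd]
  split_ifs <;> simp only [cLt] at * <;> omega

lemma sum_Ico_sum_Ico_eq_add {M : Type*} [AddCommMonoid M] (F : ℕ → ℕ → M)
    {lo₁ lo₂ d₁ d₂ k : ℕ} (hd : d₁ + d₂ = 1) (h₁ : lo₂ ≤ lo₁ + d₁) (h₂ : lo₁ ≤ lo₂ + d₂) :
    ∑ w₁ ∈ Ico lo₁ k, ∑ w₂ ∈ Ico lo₂ k, F w₁ w₂ =
      ∑ w₁ ∈ Ico lo₁ k, ∑ w₂ ∈ Ico (w₁ + d₁) k, F w₁ w₂ +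
        ∑ w₂ ∈ Ico lo₂ k, ∑ w₁ ∈ Ico (w₂ + d₂) k, F w₁ w₂ := by
  rw [← sum_product' (f := F), ← sum_filter_add_sum_filter_not _ fun w => w.1 + d₁ ≤ w.2]
  congr 1
  · exact sum_finset_product' _ _ _ fun w => by
      simp only [mem_filter, mem_product, mem_Ico]; omega
  · exact sum_finset_product_right' _ _ _ fun w => by
      simp only [mem_filter, mem_product, mem_Ico]; omega

lemma Multiset.sum_map_finset_sum {ι κ M : Type*} [AddCommMonoid M] (m : Multiset ι)
    (s : Finset κ) (f : κ → ι → M) :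
    (m.map fun c => ∑ w ∈ s, f w c).sum = ∑ w ∈ s, (m.map (f w)).sum :=
  Multiset.sum_map_sum_map m s.val

def descentsFrom (p : ℕ × ℕ) (l : CPerm) : Finset ℕ :=
  (range l.length).filter fun i => cLt (l.getD i (0, 0)) ((p :: l).getD i (0, 0))

lemma DesSet_eq_descentsFrom (a : CPerm) : DesSet a = descentsFrom (0, 0) a := by
  refine filter_congr fun i _ => ?_
  rcases i with _ | i
  · simp [cLt, Nat.pos_iff_ne_zero]
  · simp

lemma sum_descentsFrom_cons {M : Type*} [AddCommMonoid M] (f : ℕ → M) (p q : ℕ × ℕ)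
    (l : CPerm) :
    ∑ i ∈ descentsFrom p (q :: l), f (l.length + 1 - i) =
      descInd p q • f (l.length + 1) + ∑ i ∈ descentsFrom q l, f (l.length - i) := by
  simp only [descentsFrom, sum_filter, List.length_cons, sum_range_succ', List.getD_cons_succ,
    List.getD_cons_zero, Nat.sub_zero, Nat.add_sub_add_right, descInd, ite_smul, one_smul,
    zero_smul]
  exact add_comm _ _

section CompatSum

variable {R : Type*} [CommSemiring R] (x : R)

/-- `compatSum x k p v l` is the sum of `x ^ (f₁ + ⋯ + fₙ)` over `v ≤ f₁ ≤ ⋯ ≤ fₙ < k` with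
`f_{i-1} < f_i` whenever `lᵢ` is a descent after `l_{i-1}`, where `l₀ = p` and `f₀ = v`. -/
def compatSum (k : ℕ) : ℕ × ℕ → ℕ → CPerm → R
  | _, _, [] => 1
  | p, v, q :: l => ∑ w ∈ Ico (v + descInd p q) k, x ^ w * compatSum k q w l

theorem compatSum_mul_eq_sum_shuffles (k : ℕ) :
    ∀ {a b : CPerm}, a.Disjoint b → ∀ (p : ℕ × ℕ) (v : ℕ),
      compatSum x k p v a * compatSum x k p v b =
        ((shuffles a b).map (compatSum x k p v)).sum := by
  intro a b
  induction a, b using shuffles.induct with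
  | case1 b => simp [shuffles, compatSum]
  | case2 A as => simp [shuffles, compatSum]
  | case3 A as B bs ih₁ ih₂ =>
    intro hab p v
    have hAB : A ≠ B := fun h => hab (List.mem_cons_self ..) (h ▸ List.mem_cons_self ..)
    have h₁ := ih₁ (List.disjoint_cons_left.mp hab).2
    have h₂ := ih₂ (List.disjoint_cons_right.mp hab).2
    simp only [shuffles, Multiset.map_add, Multiset.sum_add, Multiset.map_map, Function.comp_def,
      compatSum, Multiset.sum_map_finset_sum, Multiset.sum_map_mul_left, ← h₁, ← h₂]
    -- a pair `(w₁, w₂)` of first values for `A` and `B` goes to the shuffle starting with the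
    -- entry whose value comes first, ties being broken by the colour order
    rw [sum_mul_sum, sum_Ico_sum_Ico_eq_add _ (descInd_add_descInd hAB)
      (by have := descInd_le_add p A B; omega) (by have := descInd_le_add p B A; omega)]
    simp only [mul_sum, sum_mul]
    congr 1 <;> exact sum_congr rfl fun _ _ => sum_congr rfl fun _ _ => by ring

lemma compatSum_eq_pow_mul (k : ℕ) :
    ∀ (l : CPerm) (p : ℕ × ℕ) (v : ℕ),
      compatSum x k p v l = x ^ (v * l.length) * compatSum x (k - v) p 0 l
  | [], _, _ => by simp [compatSum]
  | q :: l, p, v => by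
    simp only [compatSum, zero_add, sum_Ico_eq_sum_range, mul_sum]
    refine sum_congr (by rw [Nat.sub_sub]) fun i _ => ?_
    rw [compatSum_eq_pow_mul k l q, compatSum_eq_pow_mul (k - v) l q, List.length_cons,
      show k - (v + descInd p q + i) = k - v - (descInd p q + i) by omega]
    ring

lemma coeff_geom (c : R) (k : ℕ) : PowerSeries.coeff k (geom c) = c ^ k :=
  PowerSeries.coeff_mk _ _

lemma mk_compatSum_succ_cons (p q : ℕ × ℕ) (l : CPerm) :
    PowerSeries.mk (fun k => compatSum x (k + 1) p 0 (q :: l)) =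
      PowerSeries.C (x ^ (descInd p q * (l.length + 1))) *
        (PowerSeries.X ^ descInd p q *
          (geom (x ^ (l.length + 1)) * PowerSeries.mk fun k => compatSum x (k + 1) q 0 l)) := by
  ext k
  rw [PowerSeries.coeff_C_mul, PowerSeries.coeff_X_pow_mul']
  simp only [PowerSeries.coeff_mk, PowerSeries.coeff_mul,
    Finset.Nat.sum_antidiagonal_eq_sum_range_succ_mk, coeff_geom, compatSum, zero_add,
    sum_Ico_eq_sum_range]
  split_ifs with h
  · rw [mul_sum]
    refine sum_congr (by congr 1; omega) fun i hi => ?_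
    rw [mem_range] at hi
    rw [compatSum_eq_pow_mul _ _ l q,
      show k + 1 - (descInd p q + i) = k - descInd p q - i + 1 by omega]
    ring
  · rw [show k + 1 - descInd p q = 0 by omega, range_zero, sum_empty, mul_zero]

lemma mk_compatSum_succ : ∀ (l : CPerm) (p : ℕ × ℕ),
    PowerSeries.mk (fun k => compatSum x (k + 1) p 0 l) =
      PowerSeries.C (x ^ ∑ i ∈ descentsFrom p l, (l.length - i)) *
        PowerSeries.X ^ #(descentsFrom p l) * ∏ i ∈ range (l.length + 1), geom (x ^ i)
  | [], _ => by ext k; simp [compatSum, descentsFrom, coeff_geom]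
  | q :: l, p => by
    have hcomaj := sum_descentsFrom_cons (fun n => n) p q l
    have hdes := sum_descentsFrom_cons (fun _ => 1) p q l
    simp only [smul_eq_mul, mul_one, ← card_eq_sum_ones] at hcomaj hdes
    rw [mk_compatSum_succ_cons, mk_compatSum_succ l q, List.length_cons, hcomaj, hdes,
      prod_range_succ _ (l.length + 1), pow_add, pow_add, map_mul]
    ring

end CompatSum

def pzMon (a : CPerm) : PXZRing := Polynomial.C (Polynomial.C (pMon a)) * Polynomial.X ^ a.length

lemma PhiT_eq (a : CPerm) :
    PhiT a = PowerSeries.C (pzMon a) *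
      (PowerSeries.X * PowerSeries.mk fun k => compatSum xVar (k + 1) (0, 0) 0 a) := by
  rw [mk_compatSum_succ, ← DesSet_eq_descentsFrom, PhiT, pzMon, des, comaj]
  simp only [map_mul, pow_succ]
  ring

lemma coeff_zero_PhiT (a : CPerm) : PowerSeries.coeff 0 (PhiT a) = 0 := by
  rw [PhiT_eq, PowerSeries.coeff_C_mul, PowerSeries.coeff_zero_X_mul, mul_zero]

lemma coeff_succ_PhiT (a : CPerm) (k : ℕ) :
    PowerSeries.coeff (k + 1) (PhiT a) = pzMon a * compatSum xVar (k + 1) (0, 0) 0 a := by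
  rw [PhiT_eq, PowerSeries.coeff_C_mul, PowerSeries.coeff_succ_X_mul, PowerSeries.coeff_mk]

lemma pzMon_of_mem_shuffles {a b c : CPerm} (h : c ∈ shuffles a b) :
    pzMon c = pzMon a * pzMon b := by
  have hc := perm_append_of_mem_shuffles h
  rw [pzMon, pMon, (hc.map _).prod_eq, hc.length_eq]
  simp only [pzMon, pMon, List.map_append, List.prod_append, List.length_append, map_mul, pow_add]
  ring

lemma SymbolDisjoint.disjoint {a b : CPerm} (h : SymbolDisjoint a b) : a.Disjoint b :=
  fun _ hpa hpb => disjoint_left.mp h (List.mem_toFinset.mpr (List.mem_map_of_mem hpa))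
    (List.mem_toFinset.mpr (List.mem_map_of_mem hpb))

theorem hadamard_PhiT_eq_sum_shuffles_general (a b : CPerm)
    (hd : SymbolDisjoint a b) :
    hadamard (PhiT a) (PhiT b) = ((shuffles a b).map PhiT).sum := by
  refine PowerSeries.ext fun k => ?_
  rw [hadamard, PowerSeries.coeff_mk, map_multiset_sum, Multiset.map_map]
  rcases k with _ | k
  · simp only [Function.comp_def, coeff_zero_PhiT, zero_mul, Multiset.map_const',
      Multiset.sum_replicate, smul_zero]
  calc PowerSeries.coeff (k + 1) (PhiT a) * PowerSeries.coeff (k + 1) (PhiT b)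
      = pzMon a * pzMon b *
          (compatSum xVar (k + 1) (0, 0) 0 a * compatSum xVar (k + 1) (0, 0) 0 b) := by
        rw [coeff_succ_PhiT, coeff_succ_PhiT]; ring
    _ = ((shuffles a b).map
          fun c => pzMon a * pzMon b * compatSum xVar (k + 1) (0, 0) 0 c).sum := by
        rw [compatSum_mul_eq_sum_shuffles _ _ hd.disjoint, Multiset.sum_map_mul_left]
    _ = _ := congrArg Multiset.sum <| Multiset.map_congr rfl fun c hc => by
        rw [Function.comp_apply, coeff_succ_PhiT, pzMon_of_mem_shuffles hc]

/-- **Corollary.** For symbol-disjoint `r`-coloured permutations `a, b` of positive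
length: `Φ̃(a) *_t Φ̃(b) = Σ_{c ∈ a⧢b} Φ̃(c)`. -/
theorem hadamard_PhiT_eq_sum_shuffles (r : ℕ) (hr : 1 ≤ r) (a b : CPerm)
    (ha : IsCPerm a) (hb : IsCPerm b)
    (hra : RColoured r a) (hrb : RColoured r b)
    (hna : 1 ≤ a.length) (hnb : 1 ≤ b.length)
    (hd : SymbolDisjoint a b) :
    hadamard (PhiT a) (PhiT b) = ((shuffles a b).map PhiT).sum :=
  hadamard_PhiT_eq_sum_shuffles_general a b hd

end
end
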